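/- For every natural number N ≥ 1, the Shannon entropy in bits of the distribution p on {0,1}^N given by p(a) = (1 + (−1)^{|a|}/√2)/2^N equals N + 1/2 − log₂(1+√2)/√2; equivalently, N − 1 + H_bin((1 − 1/√2)/2) = N + 1/2 − log₂(1+√2)/√2. (This is the amount of global randomness, approximately N − 0.4 bits, generated on the all-zeros inputs by the strategy achieving maximum quantum violation of the MABK inequality for even N.) -/

import Mathlib

open Real

/-- The number of ones in an `N`-bit string. -/
def hammingWeight {N : ℕ} (a : Fin N → Bool) : ℕ :=
  (Finset.univ.filter fun i => a i = true).card

/-- The binary entropy function in bits, with `H_bin(0) = H_bin(1) = 0`. -/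
noncomputable def Hbin (x : ℝ) : ℝ :=
  -(x * Real.logb 2 x) - (1 - x) * Real.logb 2 (1 - x)

/-- The distribution on the all-zeros inputs of the strategy maximally violating the
MABK inequality for even `N`: `p(a) = (1 + (−1)^{|a|}/√2)/2^N`. -/
noncomputable def mabkMaxDist (N : ℕ) : (Fin N → Bool) → ℝ := fun a =>
  (1 + (-1 : ℝ) ^ hammingWeight a / Real.sqrt 2) / 2 ^ N

/-!
Only the parity of `|a|` matters, and for `N ≥ 1` exactly half of the strings have even weight,
so the entropy of `(1 + (-1)^{|a|} t)/2^N` is `N - 1 + H_bin((1 - t)/2)` for every `t`.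
At `t = 1/√2` the two logarithms are `log₂(1 ± 1/√2) = ±log₂(1 + √2) - 1/2`, because
`1 + 1/√2 = (1 + √2)/√2` and `(1 + 1/√2)(1 - 1/√2) = 1/2`.
-/

noncomputable def shannonEntropy {α : Type*} [Fintype α] (p : α → ℝ) : ℝ :=
  ∑ a, -(p a * logb 2 (p a))

noncomputable def parityDist (N : ℕ) (t : ℝ) : (Fin N → Bool) → ℝ := fun a =>
  (1 + (-1 : ℝ) ^ hammingWeight a * t) / 2 ^ N

lemma hammingWeight_cons {N : ℕ} (b : Bool) (a : Fin N → Bool) :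
    hammingWeight (Fin.cons b a : Fin (N + 1) → Bool) = b.toNat + hammingWeight a := by
  simp only [hammingWeight, Finset.card_filter, Fin.sum_univ_succ, Fin.cons_zero, Fin.cons_succ]
  cases b <;> simp

lemma sum_comp_neg_one_pow_hammingWeight {R β : Type*} [Ring R] [AddCommMonoid β] (M : ℕ)
    (g : R → β) :
    ∑ a : Fin (M + 1) → Bool, g ((-1) ^ hammingWeight a) = 2 ^ M • (g 1 + g (-1)) := by
  have hpair : ∀ k : ℕ, g (-(-1) ^ k) + g ((-1) ^ k) = g 1 + g (-1) := fun k => by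
    rcases neg_one_pow_eq_or R k with h | h <;> simp [h, add_comm]
  rw [← (Fin.consEquiv fun _ => Bool).sum_comp, Fintype.sum_prod_type, Fintype.sum_bool,
    ← Finset.sum_add_distrib]
  simp [Fin.consEquiv, hammingWeight_cons, pow_add, hpair]

lemma mul_logb_div_two_pow (x : ℝ) (N : ℕ) :
    x / 2 ^ N * logb 2 (x / 2 ^ N) = (x * logb 2 x - N * x) / 2 ^ N := by
  rcases eq_or_ne x 0 with rfl | hx
  · simp
  rw [logb_div hx (by positivity), logb_pow, logb_self_eq_one one_lt_two]
  ring

lemma Hbin_one_sub_div_two (t : ℝ) :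
    Hbin ((1 - t) / 2) = 1 - ((1 + t) * logb 2 (1 + t) + (1 - t) * logb 2 (1 - t)) / 2 := by
  have h := fun x => mul_logb_div_two_pow x 1
  simp only [pow_one, Nat.cast_one, one_mul] at h
  rw [Hbin, show 1 - (1 - t) / 2 = (1 + t) / 2 by ring, h, h]
  ring

theorem shannonEntropy_parityDist (N : ℕ) (hN : 1 ≤ N) (t : ℝ) :
    shannonEntropy (parityDist N t) = N - 1 + Hbin ((1 - t) / 2) := by
  obtain ⟨M, rfl⟩ : ∃ M, N = M + 1 := ⟨N - 1, by omega⟩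
  unfold shannonEntropy parityDist
  rw [sum_comp_neg_one_pow_hammingWeight M fun s => -((1 + s * t) / 2 ^ (M + 1) *
      logb 2 ((1 + s * t) / 2 ^ (M + 1))),
    Hbin_one_sub_div_two, nsmul_eq_mul, mul_logb_div_two_pow, mul_logb_div_two_pow]
  simp only [one_mul, neg_one_mul, ← sub_eq_add_neg]
  push_cast
  field_simp
  ring

lemma logb_two_sqrt_two : logb 2 √2 = 1 / 2 := by
  rw [logb, log_sqrt zero_le_two]
  field_simp

lemma logb_one_add_inv_sqrt_two : logb 2 (1 + 1 / √2) = logb 2 (1 + √2) - 1 / 2 := by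
  have hsqrt : (1 : ℝ) + 1 / √2 = (1 + √2) / √2 := by field_simp; ring
  rw [hsqrt, logb_div (by positivity) (by positivity), logb_two_sqrt_two]

lemma logb_one_sub_inv_sqrt_two : logb 2 (1 - 1 / √2) = -logb 2 (1 + √2) - 1 / 2 := by
  have hprod : (1 - 1 / √2) = 2⁻¹ / (1 + 1 / √2) := by
    field_simp
    nlinarith [sq_sqrt (zero_le_two (α := ℝ))]
  rw [hprod, logb_div (by norm_num) (by positivity), logb_inv, logb_self_eq_one one_lt_two,
    logb_one_add_inv_sqrt_two]
  ring

lemma Hbin_one_sub_inv_sqrt_two_div_two :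
    Hbin ((1 - 1 / √2) / 2) = 3 / 2 - logb 2 (1 + √2) / √2 := by
  rw [Hbin_one_sub_div_two, logb_one_add_inv_sqrt_two, logb_one_sub_inv_sqrt_two]
  ring

/-- The Shannon entropy in bits of `p(a) = (1 + (−1)^{|a|}/√2)/2^N` equals
`N + 1/2 − log₂(1+√2)/√2 ≈ N − 0.4`; equivalently,
`N − 1 + H_bin((1 − 1/√2)/2) = N + 1/2 − log₂(1+√2)/√2`. -/
theorem mabkMaxDist_entropy (N : ℕ) (hN : 1 ≤ N) :
    (∑ a : Fin N → Bool, -(mabkMaxDist N a * Real.logb 2 (mabkMaxDist N a))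
      = (N : ℝ) + 1 / 2 - Real.logb 2 (1 + Real.sqrt 2) / Real.sqrt 2)
    ∧ ((N : ℝ) - 1 + Hbin ((1 - 1 / Real.sqrt 2) / 2)
      = (N : ℝ) + 1 / 2 - Real.logb 2 (1 + Real.sqrt 2) / Real.sqrt 2) := by
  have hdist : mabkMaxDist N = parityDist N (1 / √2) := by
    ext a
    simp only [mabkMaxDist, parityDist, mul_one_div]
  have hentropy := shannonEntropy_parityDist N hN (1 / √2)
  rw [← hdist, Hbin_one_sub_inv_sqrt_two_div_two] at hentropy
  rw [Hbin_one_sub_inv_sqrt_two_div_two]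
  exact ⟨by rw [← shannonEntropy, hentropy]; ring, by ring⟩
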